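/- arXiv:2504.14277 — 2 statements merged into one kernel-verified Lean document; each statement's English description precedes it below -/
import Mathlib

section
/- Let $W$ be the set of all finite binary words and for $j \geq 1$ let $W_j$ be the words of length $j$ (so $\#W_j = 2^j$). Let $\rho : W \to [0,\infty)$ satisfy $\sum_{w \in W} \rho(w)^2 \leq 1$. Then there exists an infinite binary sequence $u_1 u_2 \cdots$ such that $\sum_{j=1}^{\infty} \rho(u_1 u_2 \cdots u_j) \leq 1$. -/
open Finset

private def extN (N : ℕ) (f : Fin N → Bool) : ℕ → Bool :=
  fun n => if h : n < N then f ⟨n, h⟩ else false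

private def Lv (ρ : List Bool → ℝ) (j : ℕ) : ℝ := ∑ w : Fin j → Bool, ρ (List.ofFn w)
private def Sv (ρ : List Bool → ℝ) (j : ℕ) : ℝ := ∑ w : Fin j → Bool, ρ (List.ofFn w) ^ 2

private lemma lv_nonneg (ρ : List Bool → ℝ) (hρ : ∀ w, 0 ≤ ρ w) (j : ℕ) : 0 ≤ Lv ρ j :=
  Finset.sum_nonneg fun _ _ => hρ _

private lemma sv_nonneg (ρ : List Bool → ℝ) (j : ℕ) : 0 ≤ Sv ρ j :=
  Finset.sum_nonneg fun _ _ => by positivity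

private lemma sv_sum_le (ρ : List Bool → ℝ)
    (hsum : Summable (fun w : List Bool => ρ w ^ 2))
    (hle : ∑' w : List Bool, ρ w ^ 2 ≤ 1) (N : ℕ) :
    ∑ j ∈ range N, Sv ρ (j + 1) ≤ 1 := by
  classical
  set T : Finset (List Bool) :=
    (range N).biUnion (fun j => Finset.univ.image (fun w : Fin (j+1) → Bool => List.ofFn w))
  have hT : ∑ j ∈ range N, Sv ρ (j + 1) = ∑ w ∈ T, ρ w ^ 2 := by
    rw [Finset.sum_biUnion]
    · refine Finset.sum_congr rfl fun j _ => ?_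
      rw [Finset.sum_image (fun a _ b _ h => List.ofFn_injective h)]
      rfl
    · intro a _ b _ hab
      simp only [Finset.disjoint_left, Finset.mem_image, Finset.mem_univ, true_and]
      rintro x ⟨w, rfl⟩ ⟨v, hv⟩
      apply hab
      have := congrArg List.length hv
      simpa using this.symm
  rw [hT]
  exact le_trans (Summable.sum_le_tsum T (fun w _ => by positivity) hsum) hle

private lemma key (ρ : List Bool → ℝ) (hρ : ∀ w, 0 ≤ ρ w)
    (hsum : Summable (fun w : List Bool => ρ w ^ 2))
    (hle : ∑' w : List Bool, ρ w ^ 2 ≤ 1) (N : ℕ) :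
    ∑ j ∈ range N, Lv ρ (j + 1) / 2 ^ (j + 1) ≤ 1 := by
  have hterm : ∀ j : ℕ, Lv ρ (j+1) / 2 ^ (j+1)
      ≤ Real.sqrt ((1/2 : ℝ) ^ (j+1)) * Real.sqrt (Sv ρ (j+1)) := by
    intro j
    have h2 : (0:ℝ) < 2 ^ (j+1) := by positivity
    have ha : (0:ℝ) < Real.sqrt (2 ^ (j+1)) := Real.sqrt_pos.2 h2
    have hcs : (Lv ρ (j+1)) ^ 2 ≤ 2 ^ (j+1) * Sv ρ (j+1) := by
      have := sq_sum_le_card_mul_sum_sq (s := (Finset.univ : Finset (Fin (j+1) → Bool)))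
        (f := fun w => ρ (List.ofFn w))
      simpa [Lv, Sv, Finset.card_univ, Fintype.card_fun] using this
    have hL : Lv ρ (j+1) ≤ Real.sqrt (2 ^ (j+1) * Sv ρ (j+1)) :=
      Real.le_sqrt_of_sq_le hcs
    calc Lv ρ (j+1) / 2 ^ (j+1)
        ≤ Real.sqrt (2 ^ (j+1) * Sv ρ (j+1)) / 2 ^ (j+1) := by gcongr
      _ = Real.sqrt (2 ^ (j+1)) * Real.sqrt (Sv ρ (j+1)) / (Real.sqrt (2 ^ (j+1)))^2 := by
          rw [Real.sqrt_mul (by positivity), Real.sq_sqrt h2.le]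
      _ = Real.sqrt (Sv ρ (j+1)) / Real.sqrt (2 ^ (j+1)) := by
          rw [sq, mul_div_mul_left _ _ ha.ne']
      _ = Real.sqrt ((1/2 : ℝ) ^ (j+1)) * Real.sqrt (Sv ρ (j+1)) := by
          rw [one_div, inv_pow, Real.sqrt_inv, div_eq_mul_inv, mul_comm]
  calc ∑ j ∈ range N, Lv ρ (j + 1) / 2 ^ (j + 1)
      ≤ ∑ j ∈ range N, Real.sqrt ((1/2 : ℝ) ^ (j+1)) * Real.sqrt (Sv ρ (j+1)) :=
        Finset.sum_le_sum fun j _ => hterm j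
    _ ≤ Real.sqrt (∑ j ∈ range N, (1/2 : ℝ) ^ (j+1)) * Real.sqrt (∑ j ∈ range N, Sv ρ (j+1)) :=
        Real.sum_sqrt_mul_sqrt_le _ (fun j => by positivity) (fun j => sv_nonneg ρ _)
    _ ≤ Real.sqrt 1 * Real.sqrt 1 := by
        gcongr
        · have : ∑ j ∈ range N, (1/2 : ℝ) ^ (j+1) = 1 - (1/2)^N := by
            induction N with
            | zero => simp
            | succ n ih => rw [Finset.sum_range_succ, ih]; ring
          rw [this]; have : (0:ℝ) ≤ (1/2)^N := by positivity
          linarith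
        · exact sv_sum_le ρ hsum hle N
    _ = 1 := by simp

private def splitEquiv (j N : ℕ) (h : j + 1 ≤ N) :
    ((Fin (j+1) → Bool) × (Fin (N-(j+1)) → Bool)) ≃ (Fin N → Bool) where
  toFun p := fun i => if h' : (i : ℕ) < j + 1 then p.1 ⟨i, h'⟩ else p.2 ⟨i - (j+1), by omega⟩
  invFun f := (fun i => f ⟨i, by omega⟩, fun i => f ⟨(i : ℕ) + (j+1), by omega⟩)
  left_inv p := by
    obtain ⟨p1, p2⟩ := p
    simp only [Prod.mk.injEq]
    constructor
    · funext i; simp; intro h'; have := i.isLt; omega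
    · funext i
      rw [dif_neg (by omega)]
      congr 1
      ext
      simp
  right_inv f := by
    funext i
    by_cases h' : (i : ℕ) < j + 1
    · simp [h']
    · simp only [dif_neg h']
      congr 1
      ext
      simp
      omega

private lemma count (ρ : List Bool → ℝ) (j N : ℕ) (h : j + 1 ≤ N) :
    ∑ f : Fin N → Bool, ρ (List.ofFn fun i : Fin (j+1) => extN N f i)
      = 2 ^ (N - (j+1)) * Lv ρ (j+1) := by
  classical
  rw [← Equiv.sum_comp (splitEquiv j N h)
    (fun f => ρ (List.ofFn fun i : Fin (j+1) => extN N f i))]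
  have hval : ∀ (p : (Fin (j+1) → Bool) × (Fin (N-(j+1)) → Bool)),
      (List.ofFn fun i : Fin (j+1) => extN N (splitEquiv j N h p) i) = List.ofFn p.1 := by
    intro p
    congr 1
    funext i
    have hi : (i : ℕ) < N := by omega
    simp only [extN, dif_pos hi, splitEquiv, Equiv.coe_fn_mk]
    rw [dif_pos (show ((⟨(i:ℕ), hi⟩ : Fin N) : ℕ) < j + 1 from i.isLt)]
  calc ∑ p : (Fin (j+1) → Bool) × (Fin (N-(j+1)) → Bool),
        ρ (List.ofFn fun i : Fin (j+1) => extN N (splitEquiv j N h p) i)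
      = ∑ p : (Fin (j+1) → Bool) × (Fin (N-(j+1)) → Bool), ρ (List.ofFn p.1) := by
        exact Finset.sum_congr rfl fun p _ => by rw [hval p]
    _ = 2 ^ (N - (j+1)) * Lv ρ (j+1) := by
        rw [Fintype.sum_prod_type_right]
        simp [Lv, Finset.card_univ, Fintype.card_fun, mul_comm]

private lemma exists_f (ρ : List Bool → ℝ) (hρ : ∀ w, 0 ≤ ρ w)
    (hsum : Summable (fun w : List Bool => ρ w ^ 2))
    (hle : ∑' w : List Bool, ρ w ^ 2 ≤ 1) (N : ℕ) :
    ∃ u : ℕ → Bool, ∑ j ∈ range N, ρ (List.ofFn fun i : Fin (j+1) => u i) ≤ 1 := by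
  classical
  have htot : ∑ f : Fin N → Bool,
      (∑ j ∈ range N, ρ (List.ofFn fun i : Fin (j+1) => extN N f i))
      ≤ ∑ f : Fin N → Bool, (1:ℝ) := by
    rw [Finset.sum_comm]
    have : ∀ j ∈ range N,
        ∑ f : Fin N → Bool, ρ (List.ofFn fun i : Fin (j+1) => extN N f i)
        = 2 ^ N * (Lv ρ (j+1) / 2 ^ (j+1)) := by
      intro j hj
      rw [count ρ j N (Finset.mem_range.1 hj)]
      have hj' : j + 1 ≤ N := Finset.mem_range.1 hj
      have : (2:ℝ) ^ (N - (j+1)) * 2 ^ (j+1) = 2 ^ N := by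
        rw [← pow_add]; congr 1; omega
      field_simp
      linear_combination (Lv ρ (j+1)) * this
    rw [Finset.sum_congr rfl this, ← Finset.mul_sum]
    have hkey := key ρ hρ hsum hle N
    have hcard : ∑ f : Fin N → Bool, (1:ℝ) = 2 ^ N := by
      simp [Finset.card_univ, Fintype.card_fun]
    rw [hcard]
    nlinarith [pow_pos (show (0:ℝ) < 2 by norm_num) N]
  obtain ⟨f, _, hf⟩ := Finset.exists_le_of_sum_le (Finset.univ_nonempty) htot
  exact ⟨extN N f, hf⟩



/-- Finite binary words are modelled as `List Bool`.  If `ρ : W → [0,∞)` satisfies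
`∑_{w ∈ W} ρ(w)² ≤ 1`, then there is an infinite binary sequence `u` such that
`∑_{j≥1} ρ(u₁ ⋯ u_j) ≤ 1`. -/
theorem stmt6 (ρ : List Bool → ℝ) (hρ : ∀ w, 0 ≤ ρ w)
    (hsum : Summable (fun w : List Bool => ρ w ^ 2))
    (hle : ∑' w : List Bool, ρ w ^ 2 ≤ 1) :
    ∃ u : ℕ → Bool,
      Summable (fun j : ℕ => ρ (List.ofFn fun i : Fin (j + 1) => u i)) ∧
      ∑' j : ℕ, ρ (List.ofFn fun i : Fin (j + 1) => u i) ≤ 1 := by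
  classical
  set A : ℕ → Set (ℕ → Bool) := fun N =>
    {u | ∑ j ∈ Finset.range N, ρ (List.ofFn fun i : Fin (j+1) => u i) ≤ 1} with hA
  have hclosed : ∀ N, IsClosed (A N) := by
    intro N
    have hcont : Continuous fun u : ℕ → Bool =>
        ∑ j ∈ Finset.range N, ρ (List.ofFn fun i : Fin (j+1) => u i) := by
      refine continuous_finset_sum _ fun j _ => ?_
      have : (fun u : ℕ → Bool => ρ (List.ofFn fun i : Fin (j+1) => u i))
          = (fun v : Fin (j+1) → Bool => ρ (List.ofFn v)) ∘ (fun u i => u (i : ℕ)) := rfl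
      rw [this]
      exact Continuous.comp continuous_of_discreteTopology
        (continuous_pi fun i => continuous_apply (i : ℕ))
    exact IsClosed.preimage hcont isClosed_Iic
  have hne : ∀ N, (A N).Nonempty := fun N => exists_f ρ hρ hsum hle N
  have hsub : ∀ N, A (N + 1) ⊆ A N := by
    intro N u hu
    simp only [hA, Set.mem_setOf_eq] at hu ⊢
    refine le_trans ?_ hu
    rw [Finset.sum_range_succ]
    have := hρ (List.ofFn fun i : Fin (N+1) => u i)
    linarith
  have hcompact : IsCompact (A 0) := (isCompact_univ.of_isClosed_subset (hclosed 0)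
    (Set.subset_univ _))
  obtain ⟨u, hu⟩ := IsCompact.nonempty_iInter_of_sequence_nonempty_isCompact_isClosed
    A hsub hne hcompact hclosed
  have hall : ∀ N, ∑ j ∈ Finset.range N, ρ (List.ofFn fun i : Fin (j+1) => u i) ≤ 1 := by
    intro N
    exact Set.mem_iInter.1 hu N
  refine ⟨u, summable_of_sum_range_le (fun j => hρ _) hall,
    Real.tsum_le_of_sum_range_le (fun j => hρ _) hall⟩
end

section
/- Let $\Omega \subset X$ be a finitely connected $\tau$-cofat domain in an upper Ahlfors 2-regular (with constant $\alpha$) metric two-sphere $X$. For $x_0 \in X$ and $r > 0$ with $3r < \operatorname{diam}(X)$, the transboundary modulus of the family $\Gamma_{x_0,r}$ of curves joining $\pi_\Omega(S(x_0,r))$ and $\pi_\Omega(S(x_0,2r))$ in $\pi_\Omega(\overline{A}(x_0,r))$ satisfies $\operatorname{Mod}_T(\Gamma_{x_0,r}) \leq 9\alpha + \frac{14400\alpha}{\tau} + \frac{9\alpha}{\tau}$. -/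
open MeasureTheory Metric Set
open scoped ENNReal

/-- A set `A ⊆ X` is `τ`-fat with respect to the measure `μ`. -/
def IsFat {X : Type*} [MetricSpace X] [MeasurableSpace X] (μ : Measure X) (τ : ℝ)
    (A : Set X) : Prop :=
  ∀ x ∈ A, ∀ s : ℝ, 0 < s → ¬ A ⊆ ball x s →
    ENNReal.ofReal (τ * s ^ 2) ≤ μ (A ∩ ball x s)

/-- The connected components of the complement of `Ω`. -/
def complComponents {X : Type*} [TopologicalSpace X] (Ω : Set X) : Set (Set X) :=
  {C | ∃ x ∈ Ωᶜ, C = connectedComponentIn Ωᶜ x}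

/-- Transboundary admissibility of the weight pair `(ρΩ, ρP)` for the family
`Γ_{x₀,r}` of curves joining `π(S(x₀,r))` and `π(S(x₀,2r))` within
`π(Ā(x₀,r))`.  Curves in the quotient `Ω̂` are represented as finite chains of
`1`-Lipschitz (arclength-parametrized) subcurves `c i : [0, T i] → X` lying in the
closed annulus, with interiors in `Ω`, linked through complementary components `q i`. -/
def AdmAnn {X : Type*} [MetricSpace X] (Ω : Set X) (x₀ : X) (r : ℝ)
    (ρΩ : X → ℝ≥0∞) (ρP : Set X → ℝ≥0∞) : Prop :=
  ∀ (n : ℕ) (c : Fin (n + 1) → ℝ → X) (T : Fin (n + 1) → ℝ) (q : Fin n → Set X),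
    (∀ i, 0 ≤ T i) →
    (∀ i, LipschitzOnWith 1 (c i) (Set.Icc 0 (T i))) →
    (∀ i, ∀ t ∈ Set.Icc 0 (T i), c i t ∈ closedBall x₀ (2 * r) \ ball x₀ r) →
    (∀ i, ∀ t ∈ Set.Ioo 0 (T i), c i t ∈ Ω) →
    (∀ i, q i ∈ complComponents Ω) →
    c 0 0 ∈ sphere x₀ r →
    c (Fin.last n) (T (Fin.last n)) ∈ sphere x₀ (2 * r) →
    (∀ i : Fin n, c i.castSucc (T i.castSucc) ∈ q i ∧ c i.succ 0 ∈ q i) →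
    1 ≤ (∑ i, ∫⁻ t in Set.Icc 0 (T i), ρΩ (c i t)) + ∑ i : Fin n, ρP (q i)

/-- The transboundary modulus of the curve family `Γ_{x₀,r}`. -/
noncomputable def modTAnn {X : Type*} [MetricSpace X] [MeasurableSpace X] [BorelSpace X]
    (Ω : Set X) (x₀ : X) (r : ℝ) : ℝ≥0∞ :=
  ⨅ (ρΩ : X → ℝ≥0∞) (ρP : Set X → ℝ≥0∞) (_ : AdmAnn Ω x₀ r ρΩ ρP),
    (∫⁻ x in Ω, ρΩ x ^ 2 ∂μH[2]) + ∑' p : complComponents Ω, ρP ↑p ^ 2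

/-- Chain triangle inequality. -/
lemma chain_dist {X : Type*} [MetricSpace X] :
    ∀ (n : ℕ) (a b : Fin (n + 1) → X) (d : Fin (n + 1) → ℝ) (e : Fin n → ℝ),
    (∀ i, dist (a i) (b i) ≤ d i) →
    (∀ i : Fin n, dist (b i.castSucc) (a i.succ) ≤ e i) →
    dist (a 0) (b (Fin.last n)) ≤ (∑ i, d i) + ∑ i, e i := by
  intro n
  induction n with
  | zero =>
    intro a b d e h1 _
    simpa using h1 0
  | succ n ih =>
    intro a b d e h1 h2
    have key := ih (fun i => a i.succ) (fun i => b i.succ) (fun i => d i.succ)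
      (fun i => e i.succ) (fun i => h1 i.succ) ?_
    · have t4 : dist (a 0) (b (Fin.last (n + 1))) ≤
          dist (a 0) (b 0) + dist (b 0) (a 1) + dist (a 1) (b (Fin.last (n + 1))) :=
        dist_triangle4 _ _ _ _
      have h10 := h1 0
      have h20 := h2 0
      have e0 : (0 : Fin (n + 1)).castSucc = (0 : Fin (n + 2)) := rfl
      have e1 : (0 : Fin (n + 1)).succ = (1 : Fin (n + 2)) := rfl
      rw [e0, e1] at h20
      have ea : (fun i : Fin (n + 1) => a i.succ) 0 = a 1 := by norm_num
      have eb : (fun i : Fin (n + 1) => b i.succ) (Fin.last n) = b (Fin.last (n + 1)) := by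
        simp [Fin.succ_last]
      replace key : dist (a 1) (b (Fin.last (n + 1))) ≤ ∑ i : Fin (n + 1), d i.succ + ∑ i : Fin n, e i.succ := key
      rw [Fin.sum_univ_succ d, Fin.sum_univ_succ e]
      linarith
    · intro j
      have := h2 j.succ
      have hc : (j.succ : Fin (n + 1)).castSucc = (j.castSucc : Fin (n + 1)).succ := by
        exact Fin.ext rfl
      rw [hc] at this
      exact this


/-- Proposition 4.1: for a finitely connected `τ`-cofat domain in an upper Ahlfors
`2`-regular metric two-sphere, `Mod_T Γ_{x₀,r} ≤ 9α + 14400α/τ + 9α/τ`. -/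
theorem stmt17 {X : Type*} [MetricSpace X] [MeasurableSpace X] [BorelSpace X]
    (hX : Nonempty (X ≃ₜ Metric.sphere (0 : EuclideanSpace ℝ (Fin 3)) 1))
    (α τ : ℝ) (hα : 0 < α) (hτ : 0 < τ)
    (hreg : ∀ x : X, ∀ R : ℝ, 0 < R → R < diam (univ : Set X) →
      μH[2] (ball x R) ≤ ENNReal.ofReal (α * R ^ 2))
    (Ω : Set X) (hΩ : IsOpen Ω) (hconn : IsConnected Ω)
    (hfc : (complComponents Ω).Finite)
    (hcofat : ∀ p ∈ complComponents Ω, 0 < diam p → IsFat (μH[2] : Measure X) τ p)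
    (x₀ : X) (r : ℝ) (hr : 0 < r) (hrd : 3 * r < diam (univ : Set X)) :
    modTAnn Ω x₀ r ≤ ENNReal.ofReal (9 * α + 14400 * α / τ + 9 * α / τ) := by
  classical
  obtain ⟨e⟩ := hX
  haveI : CompactSpace X := e.symm.compactSpace
  have hbdd : ∀ s : Set X, Bornology.IsBounded s := fun s =>
    (isCompact_univ.isBounded).subset (subset_univ _)
  set A : Set X := closedBall x₀ (2 * r) \ ball x₀ r with hAdef
  set ρΩ : X → ℝ≥0∞ := fun x => if x ∈ A then ENNReal.ofReal r⁻¹ else 0 with hρΩ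
  set ρP : Set X → ℝ≥0∞ := fun p =>
    if (p ∩ A).Nonempty then ENNReal.ofReal (min (diam p / r) 1) else 0 with hρP
  have hball3 : μH[2] (ball x₀ (3 * r)) ≤ ENNReal.ofReal (9 * α * r ^ 2) := by
    have h := hreg x₀ (3 * r) (by linarith) hrd
    calc μH[2] (ball x₀ (3 * r)) ≤ ENNReal.ofReal (α * (3 * r) ^ 2) := h
      _ = ENNReal.ofReal (9 * α * r ^ 2) := by ring_nf
  have hAsub : A ⊆ ball x₀ (3 * r) := by
    intro x hx
    have h1 : dist x x₀ ≤ 2 * r := mem_closedBall.mp hx.1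
    exact mem_ball.mpr (by linarith)
  have hclosed : ∀ p ∈ complComponents Ω, IsClosed p := by
    rintro p ⟨x, hx, rfl⟩
    refine isClosed_of_closure_subset ?_
    apply IsPreconnected.subset_connectedComponentIn
      (isPreconnected_connectedComponentIn.closure)
    · exact subset_closure (mem_connectedComponentIn hx)
    · exact closure_minimal (connectedComponentIn_subset _ _) hΩ.isClosed_compl
  have hdisj : ∀ p ∈ complComponents Ω, ∀ q ∈ complComponents Ω, p ≠ q → Disjoint p q := by
    rintro p ⟨x, hx, rfl⟩ q ⟨y, hy, rfl⟩ hne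
    rw [Set.disjoint_iff_inter_eq_empty]
    by_contra h
    obtain ⟨z, hz1, hz2⟩ := Set.nonempty_iff_ne_empty.mpr h
    exact hne ((connectedComponentIn_eq hz1).trans (connectedComponentIn_eq hz2).symm)
  have hfat1 : ∀ p ∈ complComponents Ω, ∀ y ∈ p, ∀ s : ℝ, 0 < s → 2 * s < diam p →
      ENNReal.ofReal (τ * s ^ 2) ≤ μH[2] (p ∩ ball y s) := by
    intro p hp y hy s hs hsd
    apply hcofat p hp (by linarith) y hy s hs
    intro hsub
    have h1 : diam p ≤ diam (ball y s) := diam_mono hsub (hbdd _)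
    have h2 : diam (ball y s) ≤ 2 * s := diam_ball hs.le
    linarith
  have hfat2 : ∀ p ∈ complComponents Ω, ENNReal.ofReal (τ * diam p ^ 2) ≤ μH[2] p := by
    intro p hp
    rcases eq_or_lt_of_le (diam_nonneg (s := p)) with hd0 | hdpos
    · rw [← hd0]; simp
    have step : ∀ s : ℝ, 0 < s → s < diam p → ENNReal.ofReal (τ * s ^ 2) ≤ μH[2] p := by
      intro s hs hsd
      obtain ⟨x, hx, y, hy, hxy⟩ : ∃ x ∈ p, ∃ y ∈ p, s < dist x y := by
        by_contra h; push_neg at h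
        exact absurd (diam_le_of_forall_dist_le hs.le h) (not_le.mpr hsd)
      have hns : ¬ p ⊆ ball x s := by
        intro hsub
        have h1 := mem_ball.mp (hsub hy)
        rw [dist_comm] at h1; linarith
      exact le_trans (hcofat p hp hdpos x hx s hs hns) (measure_mono inter_subset_left)
    by_cases htop : μH[2] p = ⊤
    · rw [htop]; exact le_top
    rw [← ENNReal.ofReal_toReal htop]
    apply ENNReal.ofReal_le_ofReal
    set M := (μH[2] p).toReal with hM
    have hMs : ∀ s : ℝ, 0 < s → s < diam p → τ * s ^ 2 ≤ M := by
      intro s hs hsd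
      have h1 := step s hs hsd
      calc τ * s ^ 2 = (ENNReal.ofReal (τ * s ^ 2)).toReal :=
            (ENNReal.toReal_ofReal (by positivity)).symm
        _ ≤ M := ENNReal.toReal_mono htop h1
    apply le_of_forall_lt
    intro c hc
    set d := diam p with hd
    set m := max (d / 2) (Real.sqrt (max c 0 / τ)) with hm
    have hm0 : 0 < m := lt_max_of_lt_left (by linarith)
    have hmd : m < d := by
      apply max_lt (by linarith)
      rw [show d = Real.sqrt (d ^ 2) from (Real.sqrt_sq (by linarith)).symm]
      apply Real.sqrt_lt_sqrt (by positivity)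
      rw [div_lt_iff₀ hτ]
      rcases le_or_gt c 0 with h | h
      · rw [max_eq_right h]; positivity
      · rw [max_eq_left h.le]; nlinarith
    set s := (m + d) / 2 with hs
    have hs1 : m < s := by rw [hs]; linarith
    have hs2 : s < d := by rw [hs]; linarith
    have hbig := hMs s (by linarith) hs2
    have hcm : c ≤ τ * m ^ 2 := by
      rcases le_or_gt c 0 with h | h
      · have hpos : 0 < τ * m ^ 2 := by positivity
        linarith
      · have h1 : Real.sqrt (c / τ) ≤ m := by
          rw [hm, max_eq_left h.le]; exact le_max_right _ _
        have h2 : Real.sqrt (c / τ) ^ 2 = c / τ := Real.sq_sqrt (by positivity)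
        have h3 : Real.sqrt (c / τ) ^ 2 ≤ m ^ 2 := by
          apply pow_le_pow_left₀ (Real.sqrt_nonneg _) h1
        rw [h2] at h3
        rw [div_le_iff₀ hτ] at h3
        nlinarith [h3]
    have : τ * m ^ 2 < τ * s ^ 2 := by nlinarith [mul_pos hτ (mul_pos (sub_pos.mpr hs1) (show (0:ℝ) < s + m by linarith))]
    linarith
  -- admissibility
  have hadm : AdmAnn Ω x₀ r ρΩ ρP := by
    intro n c T q h1 h2 h3 h4 h5 h6 h7 h8
    have hint : ∀ i, ENNReal.ofReal (T i / r) ≤ ∫⁻ t in Set.Icc 0 (T i), ρΩ (c i t) := by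
      intro i
      have heq : ENNReal.ofReal (T i / r) = ∫⁻ _ in Set.Icc (0 : ℝ) (T i), ENNReal.ofReal r⁻¹ := by
        rw [setLIntegral_const, Real.volume_Icc, ← ENNReal.ofReal_mul (by positivity)]
        congr 1; field_simp; simp
      rw [heq, ← lintegral_indicator measurableSet_Icc, ← lintegral_indicator measurableSet_Icc]
      apply lintegral_mono
      intro t
      by_cases ht : t ∈ Set.Icc (0 : ℝ) (T i)
      · have hA : c i t ∈ A := h3 i t ht
        simp only [Set.indicator_of_mem ht, hρΩ, if_pos hA]
        exact le_refl _
      · simp [Set.indicator_of_notMem ht]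
    have hmeet : ∀ i : Fin n, ((q i) ∩ A).Nonempty := fun i =>
      ⟨c i.castSucc (T i.castSucc), (h8 i).1,
        h3 i.castSucc (T i.castSucc) ⟨h1 _, le_refl _⟩⟩
    by_cases hbig : ∃ i : Fin n, r ≤ diam (q i)
    · obtain ⟨i, hi⟩ := hbig
      have h1' : ρP (q i) = 1 := by
        rw [hρP]
        simp only [if_pos (hmeet i)]
        rw [min_eq_right ((one_le_div hr).mpr hi), ENNReal.ofReal_one]
      calc (1 : ℝ≥0∞) = ρP (q i) := h1'.symm
        _ ≤ ∑ j : Fin n, ρP (q j) := Finset.single_le_sum (f := fun j => ρP (q j)) (fun j _ => zero_le) (Finset.mem_univ i)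
        _ ≤ _ := le_add_self
    · push_neg at hbig
      have hchain : r ≤ (∑ i, T i) + ∑ i, diam (q i) := by
        have h0 : dist (c 0 0) x₀ = r := mem_sphere.mp h6
        have hlast : dist (c (Fin.last n) (T (Fin.last n))) x₀ = 2 * r := mem_sphere.mp h7
        have hd := chain_dist n (fun i => c i 0) (fun i => c i (T i)) T (fun i => diam (q i))
          (fun i => by
            have hle := (h2 i).dist_le_mul 0 ⟨le_refl _, h1 i⟩ (T i) ⟨h1 i, le_refl _⟩
            have hdist : dist (0 : ℝ) (T i) = T i := by
              rw [Real.dist_eq, abs_of_nonpos (by linarith [h1 i])]; ring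
            rw [hdist] at hle
            simpa using hle)
          (fun i => dist_le_diam_of_mem (hbdd _) (h8 i).1 (h8 i).2)
        have htri : dist (c (Fin.last n) (T (Fin.last n))) x₀ ≤
            dist (c (Fin.last n) (T (Fin.last n))) (c 0 0) + dist (c 0 0) x₀ := dist_triangle _ _ _
        rw [dist_comm (c (Fin.last n) (T (Fin.last n))) (c 0 0)] at htri
        linarith
      have hsum : (1 : ℝ≥0∞) ≤ (∑ i, ENNReal.ofReal (T i / r)) +
          ∑ i : Fin n, ENNReal.ofReal (diam (q i) / r) := by
        rw [← ENNReal.ofReal_sum_of_nonneg (fun i _ => div_nonneg (h1 i) hr.le),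
          ← ENNReal.ofReal_sum_of_nonneg (fun i _ => div_nonneg diam_nonneg hr.le),
          ← ENNReal.ofReal_add (Finset.sum_nonneg fun i _ => div_nonneg (h1 i) hr.le)
            (Finset.sum_nonneg fun i _ => div_nonneg diam_nonneg hr.le),
          ← ENNReal.ofReal_one]
        apply ENNReal.ofReal_le_ofReal
        rw [← Finset.sum_div, ← Finset.sum_div, ← add_div, le_div_iff₀ hr, one_mul]
        linarith
      refine le_trans hsum (add_le_add (Finset.sum_le_sum fun i _ => hint i)
        (Finset.sum_le_sum fun i _ => ?_))
      simp only [hρP]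
      simp only [if_pos (hmeet i)]
      rw [min_eq_left ((div_le_one hr).mpr (hbig i).le)]
  -- energy bound
  have hAm : MeasurableSet A := measurableSet_closedBall.diff measurableSet_ball
  have hE1 : (∫⁻ x in Ω, ρΩ x ^ 2 ∂μH[2]) ≤ ENNReal.ofReal (9 * α) := by
    calc ∫⁻ x in Ω, ρΩ x ^ 2 ∂μH[2] ≤ ∫⁻ x, ρΩ x ^ 2 ∂μH[2] := setLIntegral_le_lintegral _ _
      _ = ∫⁻ x, A.indicator (fun _ => ENNReal.ofReal r⁻¹ ^ 2) x ∂μH[2] := by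
          congr 1; ext x; rw [hρΩ]
          by_cases hx : x ∈ A <;> simp [hx]
      _ = ENNReal.ofReal r⁻¹ ^ 2 * μH[2] A := by
          rw [lintegral_indicator hAm, setLIntegral_const]
      _ ≤ ENNReal.ofReal r⁻¹ ^ 2 * ENNReal.ofReal (9 * α * r ^ 2) := by
          gcongr
          exact le_trans (measure_mono hAsub) hball3
      _ = ENNReal.ofReal (9 * α) := by
          rw [← ENNReal.ofReal_pow (by positivity), ← ENNReal.ofReal_mul (by positivity)]
          congr 1; field_simp
  haveI : Fintype ↥(complComponents Ω) := hfc.fintype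
  have hE2 : (∑' p : complComponents Ω, ρP ↑p ^ 2) ≤
      ENNReal.ofReal (14400 * α / τ) + ENNReal.ofReal (9 * α / τ) := by
    rw [tsum_fintype]
    set meet : ↥(complComponents Ω) → Prop := fun p => ((p : Set X) ∩ A).Nonempty with hmeetdef
    set big : ↥(complComponents Ω) → Prop := fun p => r / 10 ≤ diam (p : Set X) with hbigdef
    have hz : ∑ p ∈ Finset.univ.filter (fun p => ¬ meet p), ρP ↑p ^ 2 = 0 := by
      apply Finset.sum_eq_zero
      intro p hp
      have := (Finset.mem_filter.mp hp).2
      simp only [hρP]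
      simp only [if_neg (show ¬ ((↑p : Set X) ∩ A).Nonempty from this)]
      simp
    have hsplit : ∑ p : ↥(complComponents Ω), ρP ↑p ^ 2 =
        (∑ p ∈ (Finset.univ.filter meet).filter big, ρP ↑p ^ 2) +
        ∑ p ∈ (Finset.univ.filter meet).filter (fun p => ¬ big p), ρP ↑p ^ 2 := by
      rw [Finset.sum_filter_add_sum_filter_not]
      rw [← Finset.sum_filter_add_sum_filter_not Finset.univ meet (fun p => ρP ↑p ^ 2), hz,
        add_zero]
    rw [hsplit]
    have hS1 : (∑ p ∈ (Finset.univ.filter meet).filter big, ρP ↑p ^ 2) ≤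
        ENNReal.ofReal (14400 * α / τ) := by
      set S1 := (Finset.univ.filter meet).filter big with hS1def
      have hb : ∀ p ∈ S1, ρP (↑p : Set X) ^ 2 ≤ 1 := by
        intro p _
        have h1 : ρP ↑p ≤ 1 := by
          simp only [hρP]
          split_ifs
          · calc ENNReal.ofReal (min (diam (↑p : Set X) / r) 1) ≤ ENNReal.ofReal 1 :=
                ENNReal.ofReal_le_ofReal (min_le_right _ _)
              _ = 1 := ENNReal.ofReal_one
          · exact zero_le_one
        calc ρP (↑p : Set X) ^ 2 ≤ 1 ^ 2 := by gcongr
          _ = 1 := one_pow 2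
      have hkey : ∀ p ∈ S1, ENNReal.ofReal (τ * (r / 21) ^ 2) ≤
          μH[2] ((p : Set X) ∩ ball x₀ (3 * r)) := by
        intro p hp
        have hmem := Finset.mem_filter.mp hp
        have hbigp : r / 10 ≤ diam (p : Set X) := hmem.2
        obtain ⟨y, hyp, hyA⟩ := (Finset.mem_filter.mp hmem.1).2
        have h1 := hfat1 ↑p p.2 y hyp (r / 21) (by linarith) (by linarith)
        refine le_trans h1 (measure_mono (inter_subset_inter_right _ ?_))
        intro z hz
        have hy3 : dist y x₀ ≤ 2 * r := mem_closedBall.mp hyA.1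
        have hz1 := mem_ball.mp hz
        exact mem_ball.mpr (lt_of_le_of_lt (dist_triangle z y x₀) (by linarith))
      have hdisjS : (↑S1 : Set ↥(complComponents Ω)).PairwiseDisjoint
          (fun p => (p : Set X) ∩ ball x₀ (3 * r)) := by
        intro p _ q _ hpq
        exact Disjoint.mono inter_subset_left inter_subset_left
          (hdisj ↑p p.2 ↑q q.2 (Subtype.coe_injective.ne hpq))
      have hmS : ∀ p ∈ S1, MeasurableSet ((p : Set X) ∩ ball x₀ (3 * r)) := fun p _ =>
        ((hclosed ↑p p.2).measurableSet).inter measurableSet_ball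
      have hcardle : (S1.card : ℝ≥0∞) * ENNReal.ofReal (τ * (r / 21) ^ 2) ≤
          ENNReal.ofReal (9 * α * r ^ 2) := by
        calc (S1.card : ℝ≥0∞) * ENNReal.ofReal (τ * (r / 21) ^ 2)
            = ∑ _p ∈ S1, ENNReal.ofReal (τ * (r / 21) ^ 2) := by
              rw [Finset.sum_const, nsmul_eq_mul]
          _ ≤ ∑ p ∈ S1, μH[2] ((p : Set X) ∩ ball x₀ (3 * r)) := Finset.sum_le_sum hkey
          _ = μH[2] (⋃ p ∈ S1, (p : Set X) ∩ ball x₀ (3 * r)) :=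
              (measure_biUnion_finset hdisjS hmS).symm
          _ ≤ μH[2] (ball x₀ (3 * r)) :=
              measure_mono (Set.iUnion₂_subset fun p _ => inter_subset_right)
          _ ≤ ENNReal.ofReal (9 * α * r ^ 2) := hball3
      have hc0 : ENNReal.ofReal (τ * (r / 21) ^ 2) ≠ 0 :=
        ne_of_gt (ENNReal.ofReal_pos.mpr (by positivity))
      have hcT : ENNReal.ofReal (τ * (r / 21) ^ 2) ≠ ⊤ := ENNReal.ofReal_ne_top
      have hcard := (ENNReal.le_div_iff_mul_le (Or.inl hc0) (Or.inl hcT)).mpr hcardle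
      calc (∑ p ∈ S1, ρP (↑p : Set X) ^ 2) ≤ ∑ _p ∈ S1, (1 : ℝ≥0∞) := Finset.sum_le_sum hb
        _ = (S1.card : ℝ≥0∞) := by rw [Finset.sum_const, nsmul_eq_mul, mul_one]
        _ ≤ ENNReal.ofReal (9 * α * r ^ 2) / ENNReal.ofReal (τ * (r / 21) ^ 2) := hcard
        _ ≤ ENNReal.ofReal (14400 * α / τ) := by
            rw [← ENNReal.ofReal_div_of_pos (by positivity)]
            apply ENNReal.ofReal_le_ofReal
            have heq : 9 * α * r ^ 2 / (τ * (r / 21) ^ 2) = 3969 * α / τ := by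
              field_simp; ring
            rw [heq]
            exact (div_le_div_iff_of_pos_right hτ).mpr (by nlinarith)
    have hS2 : (∑ p ∈ (Finset.univ.filter meet).filter (fun p => ¬ big p), ρP ↑p ^ 2) ≤
        ENNReal.ofReal (9 * α / τ) := by
      set S2 := (Finset.univ.filter meet).filter (fun p => ¬ big p) with hS2def
      have hbound : ∀ p ∈ S2, ρP (↑p : Set X) ^ 2 ≤
          μH[2] (↑p : Set X) * (ENNReal.ofReal (τ * r ^ 2))⁻¹ := by
        intro p hp
        have hmem := Finset.mem_filter.mp hp
        have hmeetp : ((↑p : Set X) ∩ A).Nonempty := (Finset.mem_filter.mp hmem.1).2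
        simp only [hρP]
        rw [if_pos hmeetp]
        calc ENNReal.ofReal (min (diam (↑p : Set X) / r) 1) ^ 2
            ≤ ENNReal.ofReal (diam (↑p : Set X) / r) ^ 2 := by
              gcongr
              exact min_le_left _ _
          _ = ENNReal.ofReal ((diam (↑p : Set X) / r) ^ 2) :=
              (ENNReal.ofReal_pow (by positivity) _).symm
          _ = ENNReal.ofReal (τ * diam (↑p : Set X) ^ 2) / ENNReal.ofReal (τ * r ^ 2) := by
              rw [← ENNReal.ofReal_div_of_pos (by positivity)]
              congr 1
              field_simp
          _ ≤ μH[2] (↑p : Set X) / ENNReal.ofReal (τ * r ^ 2) := by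
              gcongr
              exact hfat2 ↑p p.2
          _ = μH[2] (↑p : Set X) * (ENNReal.ofReal (τ * r ^ 2))⁻¹ := by
              rw [div_eq_mul_inv]
      have hsub3 : ∀ p ∈ S2, (↑p : Set X) ⊆ ball x₀ (3 * r) := by
        intro p hp z hz
        have hmem := Finset.mem_filter.mp hp
        obtain ⟨y, hyp, hyA⟩ := (Finset.mem_filter.mp hmem.1).2
        have hsmall : diam (↑p : Set X) < r / 10 := not_le.mp hmem.2
        have h1 : dist z y ≤ diam (↑p : Set X) := dist_le_diam_of_mem (hbdd _) hz hyp
        have h2 : dist y x₀ ≤ 2 * r := mem_closedBall.mp hyA.1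
        exact mem_ball.mpr (lt_of_le_of_lt (dist_triangle z y x₀) (by linarith))
      have hdisjS : (↑S2 : Set ↥(complComponents Ω)).PairwiseDisjoint
          (fun p => (↑p : Set X)) := by
        intro p _ q _ hpq
        exact hdisj ↑p p.2 ↑q q.2 (Subtype.coe_injective.ne hpq)
      have hmS : ∀ p ∈ S2, MeasurableSet (↑p : Set X) := fun p _ =>
        (hclosed ↑p p.2).measurableSet
      have hsum2 : ∑ p ∈ S2, μH[2] (↑p : Set X) ≤ ENNReal.ofReal (9 * α * r ^ 2) := by
        rw [← measure_biUnion_finset hdisjS hmS]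
        exact le_trans (measure_mono (Set.iUnion₂_subset hsub3)) hball3
      calc (∑ p ∈ S2, ρP (↑p : Set X) ^ 2)
          ≤ ∑ p ∈ S2, μH[2] (↑p : Set X) * (ENNReal.ofReal (τ * r ^ 2))⁻¹ :=
            Finset.sum_le_sum hbound
        _ = (∑ p ∈ S2, μH[2] (↑p : Set X)) * (ENNReal.ofReal (τ * r ^ 2))⁻¹ :=
            (Finset.sum_mul _ _ _).symm
        _ ≤ ENNReal.ofReal (9 * α * r ^ 2) * (ENNReal.ofReal (τ * r ^ 2))⁻¹ := by
            gcongr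
        _ = ENNReal.ofReal (9 * α * r ^ 2) / ENNReal.ofReal (τ * r ^ 2) := by
            rw [div_eq_mul_inv]
        _ ≤ ENNReal.ofReal (9 * α / τ) := by
            rw [← ENNReal.ofReal_div_of_pos (by positivity)]
            apply ENNReal.ofReal_le_ofReal
            rw [show 9 * α * r ^ 2 / (τ * r ^ 2) = 9 * α / τ by field_simp]
    exact add_le_add hS1 hS2
  calc modTAnn Ω x₀ r ≤ (∫⁻ x in Ω, ρΩ x ^ 2 ∂μH[2]) + ∑' p : complComponents Ω, ρP ↑p ^ 2 := by
        unfold modTAnn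
        exact iInf_le_of_le ρΩ (iInf_le_of_le ρP (iInf_le _ hadm))
    _ ≤ ENNReal.ofReal (9 * α) + (ENNReal.ofReal (14400 * α / τ) + ENNReal.ofReal (9 * α / τ)) :=
        add_le_add hE1 hE2
    _ = ENNReal.ofReal (9 * α + 14400 * α / τ + 9 * α / τ) := by
        rw [← ENNReal.ofReal_add (by positivity) (by positivity),
          ← ENNReal.ofReal_add (by positivity) (by positivity)]
        congr 1
        ring
end
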